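/- arXiv:2311.11869 — 2 statements merged into one kernel-verified Lean document; each statement's English description precedes it below -/
import Mathlib

section
/- Let APX, OPT be triangle-free 2-matchings of G with |N_APX(u)| ≤ |N_OPT(u)| for all u, and let P_1,...,P_k be edge-disjoint augmenting trails in APX △ OPT such that the endpoints of each P_j are deficient w.r.t. P_1 ∪ ... ∪ P_{j-1}. Then for every vertex u and every j ≤ k: |N_{APX △ P_j}(u)| ≤ 2 and |N_{OPT △ (P_1 ∪ ... ∪ P_j)}(u)| ≤ 2. -/
open Finset symmDiff

variable {V : Type*}

/-- Neighbors of `u` via edges in `S`. -/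
def nbrs [Fintype V] [DecidableEq V] (S : Finset (Sym2 V)) (u : V) : Finset V :=
  Finset.univ.filter (fun v => s(u, v) ∈ S)

/-- `M` is a (simple) 2-matching of `G`: a set of edges of `G` giving each vertex degree ≤ 2. -/
def Is2Matching [Fintype V] [DecidableEq V] (G : SimpleGraph V) [DecidableRel G.Adj]
    (M : Finset (Sym2 V)) : Prop :=
  M ⊆ G.edgeFinset ∧ ∀ u : V, (nbrs M u).card ≤ 2

/-- The edge set `S` contains a triangle. -/
def HasTriangle [DecidableEq V] (S : Finset (Sym2 V)) : Prop :=
  ∃ a b c : V, a ≠ b ∧ b ≠ c ∧ a ≠ c ∧ s(a, b) ∈ S ∧ s(b, c) ∈ S ∧ s(a, c) ∈ S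

/-- A triangle-free 2-matching. -/
def IsTF2M [Fintype V] [DecidableEq V] (G : SimpleGraph V) [DecidableRel G.Adj]
    (M : Finset (Sym2 V)) : Prop :=
  Is2Matching G M ∧ ¬ HasTriangle M

/-- The list of edges of a trail given by its vertex sequence. -/
def trailEdges (vs : List V) : List (Sym2 V) :=
  List.zipWith (fun a b => s(a, b)) vs vs.tail

/-- A trail: at least one edge, consecutive vertices distinct, all edges distinct. -/
def IsTrail [DecidableEq V] (vs : List V) : Prop :=
  2 ≤ vs.length ∧ vs.Chain' (· ≠ ·) ∧ (trailEdges vs).Nodup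

/-- Edge set of a trail. -/
def edgesOf [DecidableEq V] (vs : List V) : Finset (Sym2 V) :=
  (trailEdges vs).toFinset

/-- An alternating trail w.r.t. `M`: edges alternate between `M` and its complement. -/
def IsAlternating [DecidableEq V] (M : Finset (Sym2 V)) (vs : List V) : Prop :=
  IsTrail vs ∧ (trailEdges vs).Chain' (fun e f => e ∈ M ↔ f ∉ M)

/-- An augmenting trail for `M`: alternating, and `M ∆ P` is a triangle-free 2-matching
of size `|M| + 1`. -/
def IsAugmenting [Fintype V] [DecidableEq V] (G : SimpleGraph V) [DecidableRel G.Adj]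
    (M : Finset (Sym2 V)) (vs : List V) : Prop :=
  IsAlternating M vs ∧ IsTF2M G (M ∆ edgesOf vs) ∧ (M ∆ edgesOf vs).card = M.card + 1

/-- The first edge of the trail `vs` belongs to `S`. -/
def FirstEdgeIn [DecidableEq V] (vs : List V) (S : Finset (Sym2 V)) : Prop :=
  ∃ e ∈ S, (trailEdges vs).head? = some e

/-- The last edge of the trail `vs` belongs to `S`. -/
def LastEdgeIn [DecidableEq V] (vs : List V) (S : Finset (Sym2 V)) : Prop :=
  ∃ e ∈ S, (trailEdges vs).getLast? = some e

/-- `u` is deficient w.r.t. `E'`. -/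
def Deficient [Fintype V] [DecidableEq V] (APX OPT E' : Finset (Sym2 V)) (u : V) : Prop :=
  (nbrs (APX \ E') u).card < (nbrs (OPT \ E') u).card


section Helpers

@[simp] lemma mem_nbrs [Fintype V] [DecidableEq V] {S : Finset (Sym2 V)} {u v : V} :
    v ∈ nbrs S u ↔ s(u, v) ∈ S := by simp [nbrs]

lemma nbrs_subset [Fintype V] [DecidableEq V] {S T : Finset (Sym2 V)} (h : S ⊆ T) (u : V) :
    nbrs S u ⊆ nbrs T u := fun v hv => mem_nbrs.mpr (h (mem_nbrs.mp hv))

lemma card_range_even (n : ℕ) :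
    ((Finset.range n).filter (fun k => Even k)).card = (n + 1) / 2 := by
  induction n with
  | zero => simp
  | succ n ih =>
    rw [Finset.range_add_one, Finset.filter_insert]
    by_cases h : Even n
    · rw [if_pos h, Finset.card_insert_of_notMem (by simp), ih]
      rw [Nat.even_iff] at h; omega
    · rw [if_neg h, ih]
      rw [Nat.even_iff] at h; omega

lemma card_range_odd (n : ℕ) :
    ((Finset.range n).filter (fun k => Odd k)).card = n / 2 := by
  induction n with
  | zero => simp
  | succ n ih =>
    rw [Finset.range_add_one, Finset.filter_insert]
    by_cases h : Odd n
    · rw [if_pos h, Finset.card_insert_of_notMem (by simp), ih]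
      rw [Nat.odd_iff] at h; omega
    · rw [if_neg h, ih]
      rw [Nat.odd_iff] at h; omega

lemma trailEdges_length (vs : List V) : (trailEdges vs).length = vs.length - 1 := by
  simp [trailEdges]

lemma trailEdges_getElem (vs : List V) (k : ℕ) (hk : k < (trailEdges vs).length) :
    (trailEdges vs)[k] =
      s(vs[k]'(by rw [trailEdges_length] at hk; omega),
        vs[k + 1]'(by rw [trailEdges_length] at hk; omega)) := by
  simp only [trailEdges, List.getElem_zipWith, List.getElem_tail]

end Helpers

lemma key_lemma [Fintype V] [DecidableEq V] (APX : Finset (Sym2 V)) (vs : List V)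
    (halt : IsAlternating APX vs)
    (hcard : (APX ∆ edgesOf vs).card = APX.card + 1) (u : V) :
    (nbrs (edgesOf vs ∩ APX) u).card ≤ (nbrs (edgesOf vs \ APX) u).card := by
  obtain ⟨⟨hlen, hchain, hnodup⟩, haltE⟩ := halt
  set es := trailEdges vs with hes
  set n := es.length with hnn
  have hn : n = vs.length - 1 := trailEdges_length vs
  have hget : ∀ k (hk : k < n), es[k] =
      s(vs[k]'(by omega), vs[k + 1]'(by omega)) := by
    intro k hk; exact trailEdges_getElem vs k hk
  have hvne : ∀ k (h : k + 1 < vs.length), vs[k] ≠ vs[k + 1] := by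
    have hc := List.isChain_iff_getElem.mp hchain
    intro k h
    simpa using hc k (by omega)
  have halt' : ∀ k (h : k + 1 < n), (es[k]'(by omega) ∈ APX ↔ es[k + 1]'h ∉ APX) := by
    have hc := List.isChain_iff_getElem.mp haltE
    intro k h
    simpa using hc k (by omega)
  have e0lt : 0 < n := by omega
  have hpar0 : ∀ k (hk : k < n), (es[k] ∈ APX ↔ ((es[0]'e0lt ∈ APX) ↔ Even k)) := by
    intro k
    induction k with
    | zero => intro hk; simp
    | succ k ih =>
      intro hk
      have h1 := ih (by omega)
      have h2 := halt' k hk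
      rw [Nat.even_add_one]
      tauto
  have hEcard : (edgesOf vs).card = n := List.toFinset_card_of_nodup hnodup
  have hcount : ∀ S : Finset (Sym2 V),
      ((Finset.range n).filter (fun k => es.getD k s(u, u) ∈ S)).card
        = (edgesOf vs ∩ S).card := by
    intro S
    apply Finset.card_bij (fun k _ => es.getD k s(u, u))
    · intro k hk
      simp only [Finset.mem_filter, Finset.mem_range] at hk
      obtain ⟨hk1, hk2⟩ := hk
      rw [Finset.mem_inter]
      refine ⟨?_, hk2⟩
      rw [edgesOf, List.mem_toFinset, ← hes, List.getD_eq_getElem _ _ hk1]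
      exact List.getElem_mem _
    · intro k1 h1 k2 h2 heq
      simp only [Finset.mem_filter, Finset.mem_range] at h1 h2
      rw [List.getD_eq_getElem _ _ h1.1, List.getD_eq_getElem _ _ h2.1] at heq
      have h3 := List.nodup_iff_injective_getElem.mp hnodup
        (a₁ := ⟨k1, h1.1⟩) (a₂ := ⟨k2, h2.1⟩) heq
      exact congrArg Fin.val h3
    · intro e he
      rw [Finset.mem_inter, edgesOf, List.mem_toFinset, ← hes, List.mem_iff_getElem] at he
      obtain ⟨⟨k, hk, hek⟩, heS⟩ := he
      refine ⟨k, ?_, ?_⟩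
      · simp only [Finset.mem_filter, Finset.mem_range]
        exact ⟨hk, by rw [List.getD_eq_getElem _ _ hk, hek]; exact heS⟩
      · rw [List.getD_eq_getElem _ _ hk, hek]
  have hsd : (edgesOf vs \ APX).card = (edgesOf vs ∩ APX).card + 1 := by
    have h1 : (APX ∆ edgesOf vs).card
        = (APX \ edgesOf vs).card + (edgesOf vs \ APX).card := by
      rw [symmDiff_def, Finset.sup_eq_union]
      exact Finset.card_union_of_disjoint disjoint_sdiff_sdiff
    have h2 := Finset.card_inter_add_card_sdiff APX (edgesOf vs)
    have h3 : APX ∩ edgesOf vs = edgesOf vs ∩ APX := Finset.inter_comm _ _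
    rw [h3] at h2
    omega
  have hsum : (edgesOf vs ∩ APX).card + (edgesOf vs \ APX).card = (edgesOf vs).card :=
    Finset.card_inter_add_card_sdiff _ _
  have hE0 : es[0]'e0lt ∉ APX := by
    intro h0
    have hfe : ((Finset.range n).filter (fun k => es.getD k s(u, u) ∈ APX))
        = ((Finset.range n).filter (fun k => Even k)) := by
      apply Finset.filter_congr
      intro k hk
      rw [Finset.mem_range] at hk
      rw [List.getD_eq_getElem _ _ hk, hpar0 k hk]
      tauto
    have c1 : (edgesOf vs ∩ APX).card = (n + 1) / 2 := by
      rw [← hcount APX, hfe, card_range_even]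
    omega
  have hpar : ∀ k (hk : k < n), (es[k] ∈ APX ↔ Odd k) := by
    intro k hk
    rw [hpar0 k hk]
    constructor
    · intro h
      rcases Nat.even_or_odd k with he | ho
      · exact absurd (h.mpr he) hE0
      · exact ho
    · intro h
      exact iff_of_false hE0
        (by rw [Nat.even_iff]; have := Nat.odd_iff.mp h; omega)
  have hnodd : n % 2 = 1 := by
    have hfo : ((Finset.range n).filter (fun k => es.getD k s(u, u) ∈ APX))
        = ((Finset.range n).filter (fun k => Odd k)) := by
      apply Finset.filter_congr
      intro k hk
      rw [Finset.mem_range] at hk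
      rw [List.getD_eq_getElem _ _ hk, hpar k hk]
    have c1 : (edgesOf vs ∩ APX).card = n / 2 := by
      rw [← hcount APX, hfo, card_range_odd]
    omega
  -- the edge associated to an incident index
  have hedge : ∀ k (hk1 : k < n), (u = vs.getD k u ∨ u = vs.getD (k + 1) u) →
      s(u, if u = vs.getD k u then vs.getD (k + 1) u else vs.getD k u) = es[k]'hk1 := by
    intro k hk1 hinc
    have hb1 : k < vs.length := by omega
    have hb2 : k + 1 < vs.length := by omega
    rw [hget k hk1]
    rw [List.getD_eq_getElem _ _ hb1, List.getD_eq_getElem _ _ hb2] at hinc ⊢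
    by_cases hc : u = vs[k]'hb1
    · rw [if_pos hc, hc]
    · rw [if_neg hc, hinc.resolve_left hc]
      exact Sym2.eq_swap
  -- card of nbrs equals card of incidence index sets
  have hnb : ∀ (S : Finset (Sym2 V)) (pp : ℕ → Prop) [DecidablePred pp],
      (∀ k (hk : k < n), (es[k] ∈ S ↔ pp k)) →
      (nbrs (edgesOf vs ∩ S) u).card =
        ((Finset.range n).filter
          (fun k => pp k ∧ (u = vs.getD k u ∨ u = vs.getD (k + 1) u))).card := by
    intro S pp inst hmem
    symm
    apply Finset.card_bij
      (fun k _ => if u = vs.getD k u then vs.getD (k + 1) u else vs.getD k u)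
    · intro k hk
      simp only [Finset.mem_filter, Finset.mem_range] at hk
      obtain ⟨hk1, hpp, hinc⟩ := hk
      rw [mem_nbrs, hedge k hk1 hinc, Finset.mem_inter]
      refine ⟨?_, (hmem k hk1).mpr hpp⟩
      rw [edgesOf, List.mem_toFinset, ← hes]
      exact List.getElem_mem _
    · intro k1 h1 k2 h2 heq
      simp only [Finset.mem_filter, Finset.mem_range] at h1 h2
      obtain ⟨hk1, _, hinc1⟩ := h1
      obtain ⟨hk2, _, hinc2⟩ := h2
      have heq2 : es[k1]'hk1 = es[k2]'hk2 := by
        rw [← hedge k1 hk1 hinc1, ← hedge k2 hk2 hinc2, heq]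
      have h3 := List.nodup_iff_injective_getElem.mp hnodup
        (a₁ := ⟨k1, hk1⟩) (a₂ := ⟨k2, hk2⟩) heq2
      exact congrArg Fin.val h3
    · intro v hv
      rw [mem_nbrs, Finset.mem_inter, edgesOf, List.mem_toFinset, ← hes,
        List.mem_iff_getElem] at hv
      obtain ⟨⟨k, hk, hek⟩, hvS⟩ := hv
      have hb1 : k < vs.length := by omega
      have hb2 : k + 1 < vs.length := by omega
      have hincuv : u = vs[k]'hb1 ∨ u = vs[k + 1]'hb2 := by
        have := hget k hk
        rw [hek] at this
        rcases Sym2.eq_iff.mp this with ⟨h, -⟩ | ⟨h, -⟩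
        · exact Or.inl h
        · exact Or.inr h
      have hinc : u = vs.getD k u ∨ u = vs.getD (k + 1) u := by
        rw [List.getD_eq_getElem _ _ hb1, List.getD_eq_getElem _ _ hb2]
        exact hincuv
      refine ⟨k, ?_, ?_⟩
      · simp only [Finset.mem_filter, Finset.mem_range]
        exact ⟨hk, (hmem k hk).mp (by rw [hek]; exact hvS), hinc⟩
      · have h4 := hedge k hk hinc
        rw [hek] at h4
        exact (Sym2.congr_right.mp h4)
  have hmemO : ∀ k (hk : k < n), (es[k] ∈ edgesOf vs \ APX ↔ Even k) := by
    intro k hk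
    rw [Finset.mem_sdiff]
    have hmE : es[k] ∈ edgesOf vs := by
      rw [edgesOf, List.mem_toFinset, ← hes]; exact List.getElem_mem _
    rw [hpar k hk, Nat.odd_iff, Nat.even_iff]
    constructor
    · rintro ⟨-, h2⟩; omega
    · intro h; exact ⟨hmE, by omega⟩
  have hA := hnb APX (fun k => Odd k) hpar
  have hO := hnb (edgesOf vs \ APX) (fun k => Even k) hmemO
  have hOeq : edgesOf vs ∩ (edgesOf vs \ APX) = edgesOf vs \ APX :=
    Finset.inter_eq_right.mpr (Finset.sdiff_subset)
  rw [hOeq] at hO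
  rw [hA, hO]
  apply Finset.card_le_card_of_injOn (fun k => if u = vs.getD k u then k - 1 else k + 1)
  · intro k hk
    simp only [Finset.mem_coe, Finset.mem_filter, Finset.mem_range] at hk ⊢
    obtain ⟨hk1, hodd, hinc⟩ := hk
    have ho := Nat.odd_iff.mp hodd
    by_cases hc : u = vs.getD k u
    · rw [if_pos hc]
      refine ⟨by omega, Nat.even_iff.mpr (by omega), Or.inr ?_⟩
      have hkk : k - 1 + 1 = k := by omega
      rw [hkk]
      exact hc
    · rw [if_neg hc]
      have hu : u = vs.getD (k + 1) u := hinc.resolve_left hc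
      exact ⟨by omega, Nat.even_iff.mpr (by omega), Or.inl hu⟩
  · intro k1 h1 k2 h2 heq
    simp only [Finset.mem_coe, Finset.mem_filter, Finset.mem_range] at h1 h2
    obtain ⟨hk1, hodd1, hinc1⟩ := h1
    obtain ⟨hk2, hodd2, hinc2⟩ := h2
    have ho1 := Nat.odd_iff.mp hodd1
    have ho2 := Nat.odd_iff.mp hodd2
    dsimp only at heq
    by_cases c1 : u = vs.getD k1 u
    · by_cases c2 : u = vs.getD k2 u
      · rw [if_pos c1, if_pos c2] at heq
        omega
      · rw [if_pos c1, if_neg c2] at heq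
        exfalso
        obtain rfl : k1 = k2 + 2 := by omega
        have hb : k2 + 1 + 1 < vs.length := by omega
        have hu1 : u = vs[k2 + 1 + 1]'hb := by
          rw [List.getD_eq_getElem _ _ (by omega : k2 + 2 < vs.length)] at c1
          exact c1
        have hu2 : u = vs[k2 + 1]'(by omega) := by
          have h5 := hinc2.resolve_left c2
          rw [List.getD_eq_getElem _ _ (by omega : k2 + 1 < vs.length)] at h5
          exact h5
        exact hvne (k2 + 1) hb (hu2.symm.trans hu1)
    · by_cases c2 : u = vs.getD k2 u
      · rw [if_neg c1, if_pos c2] at heq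
        exfalso
        obtain rfl : k2 = k1 + 2 := by omega
        have hb : k1 + 1 + 1 < vs.length := by omega
        have hu1 : u = vs[k1 + 1 + 1]'hb := by
          rw [List.getD_eq_getElem _ _ (by omega : k1 + 2 < vs.length)] at c2
          exact c2
        have hu2 : u = vs[k1 + 1]'(by omega) := by
          have h5 := hinc1.resolve_left c1
          rw [List.getD_eq_getElem _ _ (by omega : k1 + 1 < vs.length)] at h5
          exact h5
        exact hvne (k1 + 1) hb (hu2.symm.trans hu1)
      · rw [if_neg c1, if_neg c2] at heq
        omega

/-- `a b c` form a triangle in the edge set `S`. -/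
def TriIn [DecidableEq V] (S : Finset (Sym2 V)) (a b c : V) : Prop :=
  a ≠ b ∧ b ≠ c ∧ a ≠ c ∧ s(a, b) ∈ S ∧ s(b, c) ∈ S ∧ s(a, c) ∈ S

theorem stmt_15 [Fintype V] [DecidableEq V] (G : SimpleGraph V) [DecidableRel G.Adj]
    (APX OPT : Finset (Sym2 V))
    (hAPX : IsTF2M G APX) (hOPT : IsTF2M G OPT)
    (hdom : ∀ u : V, (nbrs APX u).card ≤ (nbrs OPT u).card)
    (k : ℕ) (p : Fin k → List V)
    (haug : ∀ i, IsAugmenting G APX (p i))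
    (hsub : ∀ i, edgesOf (p i) ⊆ APX ∆ OPT)
    (hdisj : ∀ i j, i ≠ j → Disjoint (edgesOf (p i)) (edgesOf (p j)))
    (hends : ∀ j : Fin k, ∀ u : V,
      ((p j).head? = some u ∨ (p j).getLast? = some u) →
      Deficient APX OPT
        ((Finset.univ.filter (fun i => i < j)).biUnion fun i => edgesOf (p i)) u) :
    ∀ u : V, ∀ j : Fin k,
      (nbrs (APX ∆ edgesOf (p j)) u).card ≤ 2 ∧
      (nbrs (OPT ∆ ((Finset.univ.filter (fun i => i ≤ j)).biUnion fun i => edgesOf (p i)))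
        u).card ≤ 2 := by
  intro u j
  refine ⟨(haug j).2.1.1.2 u, ?_⟩
  set Ej := (Finset.univ.filter (fun i => i ≤ j)).biUnion (fun i => edgesOf (p i)) with hEj
  set X := nbrs (Ej ∩ OPT) u with hX
  set Y := nbrs (Ej \ OPT) u with hY
  -- per-trail set identities
  have hPAO : ∀ i : Fin k, edgesOf (p i) \ OPT = edgesOf (p i) ∩ APX := by
    intro i; ext e
    simp only [Finset.mem_sdiff, Finset.mem_inter]
    constructor
    · rintro ⟨hP, hO⟩
      have := hsub i hP
      rw [Finset.mem_symmDiff] at this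
      tauto
    · rintro ⟨hP, hA⟩
      have := hsub i hP
      rw [Finset.mem_symmDiff] at this
      tauto
  have hPOA : ∀ i : Fin k, edgesOf (p i) ∩ OPT = edgesOf (p i) \ APX := by
    intro i; ext e
    simp only [Finset.mem_sdiff, Finset.mem_inter]
    constructor
    · rintro ⟨hP, hO⟩
      have := hsub i hP
      rw [Finset.mem_symmDiff] at this
      tauto
    · rintro ⟨hP, hA⟩
      have := hsub i hP
      rw [Finset.mem_symmDiff] at this
      tauto
  have hper : ∀ i : Fin k,
      (nbrs (edgesOf (p i) \ OPT) u).card ≤ (nbrs (edgesOf (p i) ∩ OPT) u).card := by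
    intro i
    rw [hPAO i, hPOA i]
    exact key_lemma APX (p i) (haug i).1 (haug i).2.2 u
  -- biUnion decompositions
  have hYeq : Y = (Finset.univ.filter (fun i => i ≤ j)).biUnion
      (fun i => nbrs (edgesOf (p i) \ OPT) u) := by
    ext v
    simp only [hY, mem_nbrs, Finset.mem_sdiff, Finset.mem_biUnion, Finset.mem_filter,
      Finset.mem_univ, true_and, hEj]
    tauto
  have hXeq : X = (Finset.univ.filter (fun i => i ≤ j)).biUnion
      (fun i => nbrs (edgesOf (p i) ∩ OPT) u) := by
    ext v
    simp only [hX, mem_nbrs, Finset.mem_inter, Finset.mem_biUnion, Finset.mem_filter,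
      Finset.mem_univ, true_and, hEj]
    tauto
  have hdN : ∀ (f : Fin k → Finset (Sym2 V)), (∀ i, f i ⊆ edgesOf (p i)) →
      ∀ i ∈ Finset.univ.filter (fun i : Fin k => i ≤ j),
      ∀ i' ∈ Finset.univ.filter (fun i : Fin k => i ≤ j), i ≠ i' →
      Disjoint (nbrs (f i) u) (nbrs (f i') u) := by
    intro f hf i _ i' _ hne
    rw [Finset.disjoint_left]
    intro v hv hv'
    exact Finset.disjoint_left.mp (hdisj i i' hne)
      (hf i (mem_nbrs.mp hv)) (hf i' (mem_nbrs.mp hv'))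
  have hYX : Y.card ≤ X.card := by
    rw [hYeq, hXeq,
      Finset.card_biUnion (hdN _ (fun i => Finset.sdiff_subset)),
      Finset.card_biUnion (hdN _ (fun i => Finset.inter_subset_left))]
    exact Finset.sum_le_sum (fun i _ => hper i)
  have hXsub : X ⊆ nbrs OPT u := nbrs_subset Finset.inter_subset_right u
  have hBsplit : nbrs (OPT ∆ Ej) u = (nbrs OPT u \ X) ∪ Y := by
    ext v
    simp only [hX, hY, Finset.mem_union, Finset.mem_sdiff, mem_nbrs,
      Finset.mem_symmDiff, Finset.mem_inter]
    constructor
    · rintro (⟨ho, he⟩ | h)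
      · exact Or.inl ⟨ho, fun hc => he hc.1⟩
      · exact Or.inr h
    · rintro (⟨ho, hne⟩ | h)
      · exact Or.inl ⟨ho, fun he => hne ⟨he, ho⟩⟩
      · exact Or.inr h
  calc (nbrs (OPT ∆ Ej) u).card
      = ((nbrs OPT u \ X) ∪ Y).card := by rw [hBsplit]
    _ ≤ (nbrs OPT u \ X).card + Y.card := Finset.card_union_le _ _
    _ ≤ (nbrs OPT u \ X).card + X.card := Nat.add_le_add_left hYX _
    _ = (nbrs OPT u).card := Finset.card_sdiff_add_card_eq_card hXsub
    _ ≤ 2 := hOPT.1.2 u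
end

section
/- Let APX, OPT be triangle-free 2-matchings with |N_APX(u)| ≤ |N_OPT(u)| for all u, and suppose k < |OPT| − |APX| trails P_1,...,P_k are edge-disjoint alternating trails in APX △ OPT where each trail has exactly one more OPT-edge than APX-edges. Then there exists a vertex u_0 that is deficient with respect to P_1 ∪ ... ∪ P_k, i.e., |N_{APX \ P}(u_0)| < |N_{OPT \ P}(u_0)| where P = P_1 ∪ ... ∪ P_k. -/
open Finset symmDiff

variable {V : Type*}

private lemma handshake_stmt16 [Fintype V] [DecidableEq V] (S : Finset (Sym2 V))
    (h : ∀ e ∈ S, ¬ e.IsDiag) :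
    ∑ u, (Finset.univ.filter (fun v => s(u, v) ∈ S)).card = 2 * S.card := by
  classical
  have key : ∑ u, (Finset.univ.filter (fun v => s(u, v) ∈ S)).card
      = ((Finset.univ ×ˢ Finset.univ).filter (fun p : V × V => s(p.1, p.2) ∈ S)).card := by
    rw [Finset.card_filter, Finset.sum_product]
    simp only [Finset.card_filter]
  rw [key, Finset.card_eq_sum_card_fiberwise
      (f := fun p : V × V => s(p.1, p.2)) (t := S)
      (s := (Finset.univ ×ˢ Finset.univ).filter (fun p : V × V => s(p.1, p.2) ∈ S))
      (fun p hp => (Finset.mem_filter.mp hp).2)]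
  rw [Finset.sum_congr rfl (fun e he => ?_), Finset.sum_const, smul_eq_mul, mul_comm]
  induction e with
  | _ a b =>
    have hab : a ≠ b := by
      intro hh; exact h _ he (by simp [hh])
    have : ((Finset.univ ×ˢ Finset.univ).filter (fun p : V × V => s(p.1, p.2) ∈ S)).filter
        (fun p => s(p.1, p.2) = s(a, b)) = {(a, b), (b, a)} := by
      ext ⟨x, y⟩
      simp only [Finset.mem_filter, Finset.mem_product, Finset.mem_univ, true_and,
        Finset.mem_insert, Finset.mem_singleton, Prod.mk.injEq, Sym2.eq_iff]
      constructor
      · rintro ⟨-, (⟨rfl, rfl⟩ | ⟨rfl, rfl⟩)⟩ <;> simp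
      · rintro (⟨rfl, rfl⟩ | ⟨rfl, rfl⟩) <;> simp_all [Sym2.eq_swap]
    rw [this]
    rw [Finset.card_insert_of_notMem (by simp [hab, Ne.symm hab]), Finset.card_singleton]

private lemma card_inter_toFinset_stmt16 {α : Type*} [DecidableEq α] (l : List α) (hl : l.Nodup)
    (T : Finset α) :
    (T ∩ l.toFinset).card = (l.filter (fun e => decide (e ∈ T))).length := by
  rw [Finset.inter_comm, ← Finset.filter_mem_eq_inter (s := l.toFinset)]
  have : Finset.filter (fun i => i ∈ T) l.toFinset
      = (l.filter (fun e => decide (e ∈ T))).toFinset := by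
    rw [List.toFinset_filter]; simp
  rw [this, List.card_toFinset, List.Nodup.dedup (hl.filter _)]

theorem stmt_16 [Fintype V] [DecidableEq V] (G : SimpleGraph V) [DecidableRel G.Adj]
    (APX OPT : Finset (Sym2 V))
    (hAPX : IsTF2M G APX) (hOPT : IsTF2M G OPT)
    (hdom : ∀ u : V, (nbrs APX u).card ≤ (nbrs OPT u).card)
    (k : ℕ) (hk : k < OPT.card - APX.card)
    (p : Fin k → List V)
    (halt : ∀ i, IsAlternating APX (p i))
    (hsub : ∀ i, edgesOf (p i) ⊆ APX ∆ OPT)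
    (hdisj : ∀ i j, i ≠ j → Disjoint (edgesOf (p i)) (edgesOf (p j)))
    (hbal : ∀ i, ((trailEdges (p i)).filter (fun e => decide (e ∈ OPT))).length
      = ((trailEdges (p i)).filter (fun e => decide (e ∈ APX))).length + 1) :
    ∃ u₀ : V,
      (nbrs (APX \ Finset.univ.biUnion fun i => edgesOf (p i)) u₀).card
        < (nbrs (OPT \ Finset.univ.biUnion fun i => edgesOf (p i)) u₀).card := by
  classical
  by_contra hcon
  push_neg at hcon
  set P : Finset (Sym2 V) := Finset.univ.biUnion fun i => edgesOf (p i) with hP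
  have hnodiag : ∀ M : Finset (Sym2 V), M ⊆ G.edgeFinset → ∀ e ∈ M \ P, ¬ e.IsDiag := by
    intro M hM e he
    have := hM (Finset.mem_sdiff.mp he).1
    rw [SimpleGraph.mem_edgeFinset] at this
    exact G.not_isDiag_of_mem_edgeSet this
  have h1 := handshake_stmt16 (OPT \ P) (hnodiag OPT hOPT.1.1)
  have h2 := handshake_stmt16 (APX \ P) (hnodiag APX hAPX.1.1)
  have hsum : ∑ u, (nbrs (OPT \ P) u).card ≤ ∑ u, (nbrs (APX \ P) u).card :=
    Finset.sum_le_sum fun u _ => hcon u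
  simp only [nbrs] at hsum
  rw [h1, h2] at hsum
  have hcard : ∀ i, (OPT ∩ edgesOf (p i)).card = (APX ∩ edgesOf (p i)).card + 1 := by
    intro i
    have hn : (trailEdges (p i)).Nodup := (halt i).1.2.2
    simp only [edgesOf]
    rw [card_inter_toFinset_stmt16 _ hn, card_inter_toFinset_stmt16 _ hn, hbal i]
  have hPinter : ∀ T : Finset (Sym2 V),
      T ∩ P = Finset.univ.biUnion fun i => T ∩ edgesOf (p i) := by
    intro T; ext e
    simp only [hP, Finset.mem_inter, Finset.mem_biUnion, Finset.mem_univ, true_and]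
    tauto
  have hdisj' : ∀ T : Finset (Sym2 V), ∀ i ∈ Finset.univ, ∀ j ∈ Finset.univ, i ≠ j →
      Disjoint (T ∩ edgesOf (p i)) (T ∩ edgesOf (p j)) := fun T i _ j _ hij =>
    (hdisj i j hij).mono Finset.inter_subset_right Finset.inter_subset_right
  have hcardPO : (OPT ∩ P).card = (APX ∩ P).card + k := by
    rw [hPinter OPT, hPinter APX, Finset.card_biUnion (hdisj' OPT),
      Finset.card_biUnion (hdisj' APX)]
    rw [Finset.sum_congr rfl fun i _ => hcard i, Finset.sum_add_distrib]
    simp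
  have e1 : (OPT ∩ P).card + (OPT \ P).card = OPT.card := Finset.card_inter_add_card_sdiff _ _
  have e2 : (APX ∩ P).card + (APX \ P).card = APX.card := Finset.card_inter_add_card_sdiff _ _
  omega
end
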